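/- arXiv:2008.08367 — 2 statements merged into one kernel-verified Lean document; each statement's English description precedes it below -/
import Mathlib

section
/- Let Δ:[0,1]^2→[0,1] be measurable and symmetric, so that 1−Δ is a graphon, and suppose ‖T_{1−Δ}‖ = 1−ε for some ε ∈ (0,1). Then ‖Δ‖_1 ≤ ε(2−ε), where ‖Δ‖_1 = ∫_{[0,1]^2} Δ. -/
open MeasureTheory Real Filter Set Topology

noncomputable section

/-- The unit interval `[0,1]` as a subset of `ℝ`. -/
def UI : Set ℝ := Set.Icc 0 1

/-- A graphon: a symmetric measurable function `[0,1]² → [0,1]`. -/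
def IsGraphon (h : ℝ → ℝ → ℝ) : Prop :=
  Measurable (Function.uncurry h) ∧ (∀ x y, h x y = h y x) ∧
    ∀ x ∈ UI, ∀ y ∈ UI, h x y ∈ Set.Icc (0:ℝ) 1

/-- The operator norm of the integral operator `T_h` on `L²([0,1])` associated with a
symmetric bounded kernel `h`, expressed via its quadratic form. -/
def gOpNorm (h : ℝ → ℝ → ℝ) : ℝ :=
  sSup {t : ℝ | ∃ u : ℝ → ℝ, Measurable u ∧ IntegrableOn (fun x => u x ^ 2) UI ∧
    (∫ x in UI, u x ^ 2) ≤ 1 ∧ t = |∫ x in UI, ∫ y in UI, u x * h x y * u y|}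

/-- Relative entropy of Bernoulli(a) with respect to Bernoulli(b), with `0 log 0 = 0`. -/
def relEnt (a b : ℝ) : ℝ :=
  a * Real.log (a / b) + (1 - a) * Real.log ((1 - a) / (1 - b))

/-- The rate function `I_r(h) = ∫∫ R(h(x,y) | r(x,y)) dx dy`. -/
def Ient (r h : ℝ → ℝ → ℝ) : ℝ := ∫ x in UI, ∫ y in UI, relEnt (h x y) (r x y)

/-- The rate function `ψ_r(β) = inf { I_r(h) : h graphon, ‖T_h‖ = β }`. -/
def psiRate (r : ℝ → ℝ → ℝ) (β : ℝ) : ℝ :=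
  sInf {c : ℝ | ∃ h : ℝ → ℝ → ℝ, IsGraphon h ∧ gOpNorm h = β ∧ Ient r h = c}

/-- The `L²([0,1]²)` norm of a kernel. -/
def L2norm2 (f : ℝ → ℝ → ℝ) : ℝ := Real.sqrt (∫ x in UI, ∫ y in UI, f x y ^ 2)

end

/-! Since `0 ≤ 1 - Δ ≤ 1` on the unit square, `‖1 - Δ‖₂² ≤ ‖1 - Δ‖₁ = 1 - ‖Δ‖₁`. The operator norm
is at most the Hilbert–Schmidt norm: Cauchy–Schwarz on `[0,1]²` applied to `(u ⊗ u) · (1 - Δ)` gives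
`|⟨u, T u⟩| ≤ ‖u‖₂² ‖1 - Δ‖₂`. Hence `(1 - ε)² ≤ 1 - ‖Δ‖₁`. -/

open Function

section

variable {α : Type*} [MeasurableSpace α] {μ : Measure α}

theorem abs_integral_mul_le_sqrt_mul_sqrt {f g : α → ℝ} (hf : MemLp f 2 μ) (hg : MemLp g 2 μ) :
    |∫ a, f a * g a ∂μ| ≤ √(∫ a, f a ^ 2 ∂μ) * √(∫ a, g a ^ 2 ∂μ) := by
  have hnorm_rpow : ∀ φ : α → ℝ, (fun a => ‖φ a‖ ^ (2 : ℝ)) = fun a => φ a ^ 2 := fun φ => by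
    ext a; rw [Real.rpow_two, Real.norm_eq_abs, sq_abs]
  calc |∫ a, f a * g a ∂μ| ≤ ∫ a, ‖f a‖ * ‖g a‖ ∂μ := by
        rw [← Real.norm_eq_abs]
        simpa only [norm_mul] using norm_integral_le_integral_norm (fun a => f a * g a)
    _ ≤ (∫ a, ‖f a‖ ^ (2 : ℝ) ∂μ) ^ (1 / (2 : ℝ)) * (∫ a, ‖g a‖ ^ (2 : ℝ) ∂μ) ^ (1 / (2 : ℝ)) :=
        integral_mul_norm_le_Lp_mul_Lq Real.HolderConjugate.two_two (by simpa using hf)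
          (by simpa using hg)
    _ = √(∫ a, f a ^ 2 ∂μ) * √(∫ a, g a ^ 2 ∂μ) := by
        rw [hnorm_rpow f, hnorm_rpow g, Real.sqrt_eq_rpow, Real.sqrt_eq_rpow]

theorem integral_sq_le_integral_of_mem_Icc {f : α → ℝ} (hf : Integrable f μ)
    (hf01 : ∀ᵐ a ∂μ, f a ∈ Icc (0 : ℝ) 1) : ∫ a, f a ^ 2 ∂μ ≤ ∫ a, f a ∂μ :=
  integral_mono_of_nonneg (ae_of_all _ fun a => sq_nonneg _) hf <| by
    filter_upwards [hf01] with a ⟨h0, h1⟩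
    nlinarith

variable [SFinite μ]

theorem abs_integral_integral_mul_mul_le {u : α → ℝ} {h : α → α → ℝ} (hu : MemLp u 2 μ)
    (hh : MemLp (uncurry h) 2 (μ.prod μ)) :
    |∫ x, ∫ y, u x * h x y * u y ∂μ ∂μ| ≤
      (∫ x, u x ^ 2 ∂μ) * √(∫ p, h p.1 p.2 ^ 2 ∂μ.prod μ) := by
  set G : α × α → ℝ := fun p => u p.1 * u p.2
  have hG2 : (fun p => G p ^ 2) = fun p : α × α => u p.1 ^ 2 * u p.2 ^ 2 := by
    ext p; exact mul_pow _ _ _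
  have hG : MemLp G 2 (μ.prod μ) :=
    (memLp_two_iff_integrable_sq (hu.1.comp_fst.mul hu.1.comp_snd)).2 <|
      hG2 ▸ hu.integrable_sq.mul_prod hu.integrable_sq
  have hGh : Integrable (uncurry fun x y => u x * h x y * u y) (μ.prod μ) := by
    refine (hG.integrable_mul hh).congr (ae_of_all _ fun ⟨x, y⟩ => ?_)
    simp only [G, Pi.mul_apply, uncurry_apply_pair]
    ring
  have hu2 : 0 ≤ ∫ x, u x ^ 2 ∂μ := integral_nonneg fun x => sq_nonneg _
  calc |∫ x, ∫ y, u x * h x y * u y ∂μ ∂μ| = |∫ p, G p * h p.1 p.2 ∂μ.prod μ| := by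
        rw [integral_integral hGh]
        congr 2; ext p; simp only [G]; ring
    _ ≤ √(∫ p, G p ^ 2 ∂μ.prod μ) * √(∫ p, h p.1 p.2 ^ 2 ∂μ.prod μ) :=
        abs_integral_mul_le_sqrt_mul_sqrt hG hh
    _ = (∫ x, u x ^ 2 ∂μ) * √(∫ p, h p.1 p.2 ^ 2 ∂μ.prod μ) := by
        rw [hG2, integral_prod_mul (fun x => u x ^ 2) (fun y => u y ^ 2), ← sq,
          Real.sqrt_sq hu2]

end

instance isProbabilityMeasure_restrict_UI : IsProbabilityMeasure (volume.restrict UI) :=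
  ⟨by simp [UI, Real.volume_Icc]⟩

theorem gOpNorm_nonneg (h : ℝ → ℝ → ℝ) : 0 ≤ gOpNorm h :=
  Real.sSup_nonneg <| by rintro t ⟨u, -, -, -, rfl⟩; exact abs_nonneg _

theorem L2norm2_eq_sqrt_integral_prod {h : ℝ → ℝ → ℝ}
    (hh : Integrable (fun p : ℝ × ℝ => h p.1 p.2 ^ 2)
      ((volume.restrict UI).prod (volume.restrict UI))) :
    L2norm2 h = √(∫ p, h p.1 p.2 ^ 2 ∂(volume.restrict UI).prod (volume.restrict UI)) :=
  congrArg Real.sqrt (integral_integral (f := fun x y => h x y ^ 2) hh)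

theorem gOpNorm_le_L2norm2 {h : ℝ → ℝ → ℝ}
    (hh : MemLp (uncurry h) 2 ((volume.restrict UI).prod (volume.restrict UI))) :
    gOpNorm h ≤ L2norm2 h := by
  refine csSup_le ⟨0, 0, measurable_const, by simp, by simp, by simp⟩ ?_
  rintro t ⟨u, hu, hu2, hu1, rfl⟩
  have huL2 : MemLp u 2 (volume.restrict UI) :=
    (memLp_two_iff_integrable_sq hu.aestronglyMeasurable).2 hu2
  calc _ ≤ (∫ x in UI, u x ^ 2) * L2norm2 h := by
        rw [L2norm2_eq_sqrt_integral_prod hh.integrable_sq]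
        exact abs_integral_integral_mul_mul_le huL2 hh
    _ ≤ L2norm2 h := mul_le_of_le_one_left (Real.sqrt_nonneg _) hu1

theorem L1_bound_near_one_general
    (Δ : ℝ → ℝ → ℝ)
    (hΔmeas : Measurable (Function.uncurry Δ))
    (hΔrange : ∀ x ∈ UI, ∀ y ∈ UI, Δ x y ∈ Set.Icc (0:ℝ) 1)
    (ε : ℝ)
    (hnorm : gOpNorm (fun x y => 1 - Δ x y) = 1 - ε) :
    (∫ x in UI, ∫ y in UI, Δ x y) ≤ ε * (2 - ε) := by
  set P := (volume.restrict UI).prod (volume.restrict UI)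
  have hΔmem : ∀ᵐ p ∂P, Δ p.1 p.2 ∈ Icc (0 : ℝ) 1 := by
    rw [show P = _ from Measure.prod_restrict UI UI]
    filter_upwards [ae_restrict_mem (measurableSet_Icc.prod measurableSet_Icc)] with p hp
    exact hΔrange _ hp.1 _ hp.2
  have hHmem : ∀ᵐ p ∂P, 1 - Δ p.1 p.2 ∈ Icc (0 : ℝ) 1 := by
    filter_upwards [hΔmem] with p ⟨h0, h1⟩
    constructor <;> linarith
  have hΔint : Integrable (fun p : ℝ × ℝ => Δ p.1 p.2) P :=
    Integrable.of_bound hΔmeas.aestronglyMeasurable 1 <| by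
      filter_upwards [hΔmem] with p ⟨h0, h1⟩
      exact (Real.norm_of_nonneg h0).trans_le h1
  have hHint : Integrable (fun p : ℝ × ℝ => 1 - Δ p.1 p.2) P := (integrable_const 1).sub hΔint
  have hHL2 : MemLp (uncurry fun x y => 1 - Δ x y) 2 P :=
    MemLp.of_bound hHint.1 1 <| by
      filter_upwards [hHmem] with p ⟨h0, h1⟩
      exact (Real.norm_of_nonneg h0).trans_le h1
  have hHS : (1 - ε) ^ 2 ≤ ∫ p, (1 - Δ p.1 p.2) ^ 2 ∂P := by
    have h := gOpNorm_le_L2norm2 hHL2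
    rwa [hnorm, L2norm2_eq_sqrt_integral_prod hHL2.integrable_sq,
      Real.le_sqrt (hnorm ▸ gOpNorm_nonneg _) (integral_nonneg fun _ => sq_nonneg _)] at h
  calc ∫ x in UI, ∫ y in UI, Δ x y = ∫ p, Δ p.1 p.2 ∂P := integral_integral (f := Δ) hΔint
    _ = 1 - ∫ p, 1 - Δ p.1 p.2 ∂P := by
      rw [integral_sub (integrable_const 1) hΔint, integral_const, probReal_univ, one_smul]
      ring
    _ ≤ 1 - ∫ p, (1 - Δ p.1 p.2) ^ 2 ∂P :=
      sub_le_sub_left (integral_sq_le_integral_of_mem_Icc hHint hHmem) 1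
    _ ≤ ε * (2 - ε) := by linarith

/-- if ‖T_{1−Δ}‖ = 1−ε then ‖Δ‖₁ ≤ ε(2−ε). -/
theorem L1_bound_near_one
    (Δ : ℝ → ℝ → ℝ)
    (hΔmeas : Measurable (Function.uncurry Δ))
    (hΔsymm : ∀ x y, Δ x y = Δ y x)
    (hΔrange : ∀ x ∈ UI, ∀ y ∈ UI, Δ x y ∈ Set.Icc (0:ℝ) 1)
    (ε : ℝ) (hε : ε ∈ Set.Ioo (0:ℝ) 1)
    (hnorm : gOpNorm (fun x y => 1 - Δ x y) = 1 - ε) :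
    (∫ x in UI, ∫ y in UI, Δ x y) ≤ ε * (2 - ε) :=
  L1_bound_near_one_general Δ hΔmeas hΔrange ε hnorm
end

section
/- Let h̄ be a graphon of the form h̄(x,y) = Σ_{i=1}^k θ_i ν̄_i(x) ν̄_i(y) for some k ∈ ℕ, where θ_1 > θ_2 ≥ … ≥ θ_k ≥ 0 and {ν̄_1,…,ν̄_k} is an orthonormal set in L^2([0,1]). Then there exists ε > 0 such that for every graphon h with ‖T_{h−h̄}‖ < min(ε, ‖T_h‖), the operator norm ‖T_h‖ satisfies ‖T_h‖ = λ_max( Σ_{n≥0} ‖T_h‖^{−n} F_n(h,h̄) ), where λ_max denotes the largest eigenvalue of a k×k real symmetric matrix, and F_n(h,h̄) is the k×k matrix with (i,j) entry √(θ_i θ_j) ∫_{[0,1]^2} ν̄_i(x) (h−h̄)^n(x,y) ν̄_j(y) dx dy, with g^n the n-fold kernel power of g = h−h̄ (g^0 being the identity, so F_0 has entries √(θ_i θ_j)⟨ν̄_i,ν̄_j⟩). -/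
open MeasureTheory Real Filter Set Topology

noncomputable section

/-- Kernel powers: kpow g n = g^{n+1}, the (n+1)-fold kernel power of g. -/
def kpow (g : ℝ → ℝ → ℝ) : ℕ → ℝ → ℝ → ℝ
  | 0 => g
  | n + 1 => fun x y => ∫ z in UI, kpow g n x z * g z y

/-- The k×k matrix F_n(h,h̄) with (i,j) entry √(θᵢθⱼ)∫∫ ν̄ᵢ(x)(h−h̄)^n(x,y)ν̄ⱼ(y) dx dy,
with (h−h̄)^0 the identity kernel. -/
def Fmat {k : ℕ} (θ : Fin k → ℝ) (ν : Fin k → ℝ → ℝ) (g : ℝ → ℝ → ℝ) :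
    ℕ → Matrix (Fin k) (Fin k) ℝ
  | 0 => fun i j => Real.sqrt (θ i) * Real.sqrt (θ j) * ∫ x in UI, ν i x * ν j x
  | n + 1 => fun i j => Real.sqrt (θ i) * Real.sqrt (θ j) *
      ∫ x in UI, ∫ y in UI, ν i x * kpow g n x y * ν j y

/-- Largest eigenvalue of a real matrix. -/
def maxEig {k : ℕ} (M : Matrix (Fin k) (Fin k) ℝ) : ℝ :=
  sSup {t : ℝ | ∃ v : Fin k → ℝ, v ≠ 0 ∧ M.mulVec v = t • v}

end

/-!
Put `c = h - h̄`, so that `T_h = T_c + ∑ θᵢ ⟪ν̄ᵢ, ·⟫ ν̄ᵢ`, and `β = ‖T_h‖ > ‖T_c‖`. Then `β - T_c`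
is invertible with Neumann series `R = ∑ β^{-(n+1)} T_cⁿ`, so `∑ β^{-n} F_n` is the matrix
`M = β (√θᵢ √θⱼ ⟪ν̄ᵢ, R ν̄ⱼ⟫)`. If `M d = t d` with `d ≠ 0`, then `w = R (∑ √θⱼ dⱼ ν̄ⱼ)` satisfies
`⟪T_h w, w⟫ - β ‖w‖² = (t/β) (t/β - 1) |d|²`, and the left side is `≤ 0`, so `t ≤ β`.
Conversely, if `β` were not an eigenvalue of `M`, the Woodbury formula would invert `β - T_h`.
But since `h ≥ 0`, replacing `u` by `|u|` shows that the Rayleigh quotient of `T_h` comes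
arbitrarily close to `‖T_h‖`, which forces `‖T_h‖` into the spectrum of `T_h`.
-/

open scoped InnerProductSpace Matrix
open ContinuousLinearMap

noncomputable section

namespace ContinuousLinearMap

section Woodbury

variable {𝕜 E F : Type*} [NontriviallyNormedField 𝕜] [NormedAddCommGroup E] [NormedSpace 𝕜 E]
  [NormedAddCommGroup F] [NormedSpace 𝕜 F]

theorem isUnit_sub_comp_of_isUnit {a R : E →L[𝕜] E} (haR : a * R = 1) (hRa : R * a = 1)
    (U : F →L[𝕜] E) (V : E →L[𝕜] F) (h : IsUnit (1 - V ∘L R ∘L U)) : IsUnit (a - U ∘L V) := by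
  obtain ⟨L, hL⟩ := h
  set L' : F →L[𝕜] F := ↑L⁻¹
  have hL₁ : ∀ y, L' y - V (R (U (L' y))) = y := fun y => by
    simpa [hL] using DFunLike.congr_fun L.mul_inv y
  have hL₂ : ∀ y, L' (y - V (R (U y))) = y := fun y => by
    simpa [hL] using DFunLike.congr_fun L.inv_mul y
  have haR' : ∀ x, a (R x) = x := fun x => by simpa using DFunLike.congr_fun haR x
  have hRa' : ∀ x, R (a x) = x := fun x => by simpa using DFunLike.congr_fun hRa x
  refine ⟨⟨a - U ∘L V, R + R ∘L U ∘L L' ∘L V ∘L R, ?_, ?_⟩, rfl⟩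
  · ext y
    simp only [mul_apply_eq_comp, sub_apply, add_apply, comp_apply, map_add, haR']
    rw [← map_sub, hL₁, one_apply_eq_self, sub_add_cancel]
  · ext x
    simp only [mul_apply_eq_comp, sub_apply, add_apply, comp_apply, map_sub, hRa']
    have : R (U (L' (V x))) - R (U (L' (V (R (U (V x)))))) = R (U (V x)) := by
      rw [← map_sub, ← map_sub, ← map_sub, hL₂]
    rw [one_apply_eq_self]
    linear_combination (norm := module) this

end Woodbury

section NumericalRange

variable {E : Type*} [NormedAddCommGroup E] [InnerProductSpace ℝ E] {T : E →L[ℝ] E}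

theorem norm_eq_sSup_abs_inner_self (hT : (T : E →ₗ[ℝ] E).IsSymmetric) :
    ‖T‖ = sSup ((fun v => |⟪v, T v⟫_ℝ|) '' Metric.closedBall 0 1) := by
  have hle : ∀ v ∈ Metric.closedBall (0 : E) 1, |⟪v, T v⟫_ℝ| ≤ ‖T‖ := fun v hv => by
    rw [mem_closedBall_zero_iff] at hv
    calc |⟪v, T v⟫_ℝ| ≤ ‖v‖ * (‖T‖ * ‖v‖) :=
          (abs_real_inner_le_norm _ _).trans (by gcongr; exact le_opNorm _ _)
      _ ≤ 1 * (‖T‖ * 1) := by gcongr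
      _ = ‖T‖ := by ring
  refine le_antisymm ?_ (csSup_le (by simp) (Set.forall_mem_image.2 hle))
  rw [T.norm_eq_iSup_rayleighQuotient hT]
  refine ciSup_le fun x => le_csSup ⟨‖T‖, Set.forall_mem_image.2 hle⟩ ⟨‖x‖⁻¹ • x, ?_, ?_⟩
  · rw [mem_closedBall_zero_iff, norm_smul, norm_inv, norm_norm]
    exact inv_mul_le_one
  · simp only [rayleighQuotient, reApplyInnerSelf_apply, RCLike.re_to_real, map_smul,
      real_inner_smul_left, real_inner_smul_right, real_inner_comm x]
    congr 1
    ring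

theorem exists_lt_rayleighQuotient (hT : (T : E →ₗ[ℝ] E).IsSymmetric)
    (habs : ∀ x, ∃ y, ‖y‖ = ‖x‖ ∧ |⟪x, T x⟫_ℝ| ≤ ⟪y, T y⟫_ℝ) {ε : ℝ} (hε : 0 < ε) :
    ∃ x, ‖T‖ - ε < T.rayleighQuotient x := by
  have : ‖T‖ - ε < ⨆ x, |T.rayleighQuotient x| := by
    rw [← T.norm_eq_iSup_rayleighQuotient hT]
    linarith
  obtain ⟨x, hx⟩ := exists_lt_of_lt_ciSup this
  obtain ⟨y, hyx, hy⟩ := habs x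
  refine ⟨y, hx.trans_le ?_⟩
  simp only [rayleighQuotient, reApplyInnerSelf_apply, RCLike.re_to_real, abs_div, abs_pow,
    abs_norm, real_inner_comm x, real_inner_comm y, hyx]
  gcongr

end NumericalRange

section Resolvent

variable {E : Type*} [NormedAddCommGroup E] [NormedSpace ℝ E] {C : E →L[ℝ] E} {β : ℝ}

theorem apply_resolvent_apply (hβ : β ∈ resolventSet ℝ C) (y : E) :
    C (resolvent C β y) = β • resolvent C β y - y := by
  have := DFunLike.congr_fun (Ring.mul_inverse_cancel _ (spectrum.mem_resolventSet_iff.mp hβ)) y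
  simp only [mul_apply_eq_comp, sub_apply, Algebra.algebraMap_eq_smul_one, smul_apply,
    one_apply_eq_self] at this
  rw [resolvent, Algebra.algebraMap_eq_smul_one]
  linear_combination (norm := module) -this

variable [CompleteSpace E]

theorem mem_resolventSet_of_norm_lt (h : ‖C‖ < β) : β ∈ resolventSet ℝ C := by
  refine spectrum.mem_resolventSet_of_norm_lt_mul ?_
  rw [Real.norm_of_nonneg ((norm_nonneg C).trans h.le)]
  exact (mul_le_of_le_one_right (norm_nonneg _) norm_id_le).trans_lt h

theorem hasSum_resolvent (h : ‖C‖ < β) :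
    HasSum (fun n => (β ^ (n + 1))⁻¹ • C ^ n) (resolvent C β) := by
  have hβ : 0 < β := (norm_nonneg C).trans_lt h
  have hx : ‖β⁻¹ • C‖ < 1 := by
    rwa [norm_smul, Real.norm_of_nonneg (inv_nonneg.mpr hβ.le), inv_mul_lt_one₀ hβ]
  have hs := summable_geometric_of_norm_lt_one hx
  let u : (E →L[ℝ] E)ˣ := ⟨β • (1 - β⁻¹ • C), β⁻¹ • ∑' n, (β⁻¹ • C) ^ n, by
    rw [smul_mul_smul_comm, mul_inv_cancel₀ hβ.ne', one_smul, hs.one_sub_mul_tsum_pow], by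
    rw [smul_mul_smul_comm, inv_mul_cancel₀ hβ.ne', one_smul, hs.tsum_pow_mul_one_sub]⟩
  have hu : algebraMap ℝ (E →L[ℝ] E) β - C = u := by
    simp [u, Algebra.algebraMap_eq_smul_one, smul_sub, smul_smul, mul_inv_cancel₀ hβ.ne']
  have hterm : (fun n => (β ^ (n + 1))⁻¹ • C ^ n) = fun n => β⁻¹ • (β⁻¹ • C) ^ n := by
    ext1 n
    rw [smul_pow, smul_smul, inv_pow, ← mul_inv, pow_succ']
  rw [resolvent, hu, Ring.inverse_unit, hterm]
  exact hs.hasSum.const_smul _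

end Resolvent

end ContinuousLinearMap

section FiniteRankPerturbation

variable {E : Type*} [NormedAddCommGroup E] [InnerProductSpace ℝ E] {k : ℕ}

def synthesisCLM (f : Fin k → E) : (Fin k → ℝ) →L[ℝ] E :=
  ∑ i, (proj i).smulRight (f i)

def analysisCLM (f : Fin k → E) : E →L[ℝ] (Fin k → ℝ) :=
  pi fun i => innerSL ℝ (f i)

@[simp] lemma synthesisCLM_apply (f : Fin k → E) (d : Fin k → ℝ) :
    synthesisCLM f d = ∑ i, d i • f i := by
  simp [synthesisCLM]

@[simp] lemma analysisCLM_apply (f : Fin k → E) (x : E) (i : Fin k) :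
    analysisCLM f x i = ⟪f i, x⟫_ℝ := rfl

lemma inner_synthesisCLM_left (f : Fin k → E) (d : Fin k → ℝ) (x : E) :
    ⟪synthesisCLM f d, x⟫_ℝ = d ⬝ᵥ analysisCLM f x := by
  simp [sum_inner, real_inner_smul_left, dotProduct]

def resolventGram (C : E →L[ℝ] E) (f : Fin k → E) (β : ℝ) : Matrix (Fin k) (Fin k) ℝ :=
  Matrix.of fun i j => β * ⟪f i, resolvent C β (f j)⟫_ℝ

lemma resolventGram_mulVec (C : E →L[ℝ] E) (f : Fin k → E) (β : ℝ) (d : Fin k → ℝ) :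
    resolventGram C f β *ᵥ d = β • analysisCLM f (resolvent C β (synthesisCLM f d)) := by
  ext i
  simp [resolventGram, Matrix.mulVec, dotProduct, Finset.mul_sum, mul_left_comm, mul_comm]

variable (C : E →L[ℝ] E) (f : Fin k → E)

theorem le_of_resolventGram_mulVec_eq_smul {β t : ℝ} (hβ : β ∈ resolventSet ℝ C) (hβ0 : 0 < β)
    (hA : ∀ x, ⟪(C + synthesisCLM f ∘L analysisCLM f) x, x⟫_ℝ ≤ β * ‖x‖ ^ 2) {d : Fin k → ℝ}
    (hd : d ≠ 0) (heig : resolventGram C f β *ᵥ d = t • d) : t ≤ β := by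
  set w := resolvent C β (synthesisCLM f d)
  have hVw : analysisCLM f w = (t / β) • d := by
    rw [resolventGram_mulVec] at heig
    rw [div_eq_inv_mul, mul_smul, ← heig, smul_smul, inv_mul_cancel₀ hβ0.ne', one_smul]
  have hquad := hA w
  rw [add_apply, inner_add_left, apply_resolvent_apply hβ, inner_sub_left, real_inner_smul_left,
    real_inner_self_eq_norm_sq, comp_apply, inner_synthesisCLM_left, inner_synthesisCLM_left,
    hVw] at hquad
  simp only [dotProduct_smul, smul_dotProduct, smul_eq_mul] at hquad
  have hdd : 0 < d ⬝ᵥ d := lt_of_le_of_ne (Finset.sum_nonneg fun i _ => mul_self_nonneg (d i))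
    (Ne.symm (mt dotProduct_self_eq_zero.mp hd))
  have hs : t / β * (t / β - 1) ≤ 0 := by nlinarith
  have : t / β ≤ 1 := by nlinarith
  exact (div_le_one hβ0).mp this

theorem exists_resolventGram_mulVec_eq_norm_smul [CompleteSpace E]
    (hC : ‖C‖ < ‖C + synthesisCLM f ∘L analysisCLM f‖)
    (htop : ∀ ε > 0, ∃ x, ‖C + synthesisCLM f ∘L analysisCLM f‖ - ε <
      (C + synthesisCLM f ∘L analysisCLM f).rayleighQuotient x) :
    ∃ d ≠ 0, resolventGram C f ‖C + synthesisCLM f ∘L analysisCLM f‖ *ᵥ d =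
      ‖C + synthesisCLM f ∘L analysisCLM f‖ • d := by
  set A := C + synthesisCLM f ∘L analysisCLM f
  set β := ‖A‖
  by_contra! hno
  have hβC : β ∈ resolventSet ℝ C := mem_resolventSet_of_norm_lt hC
  set S : (Fin k → ℝ) →L[ℝ] (Fin k → ℝ) := analysisCLM f ∘L resolvent C β ∘L synthesisCLM f
  have hinj : Function.Injective ⇑((1 : (Fin k → ℝ) →L[ℝ] (Fin k → ℝ)) - S) := by
    refine (injective_iff_map_eq_zero _).mpr fun d hd => ?_
    by_contra hd0
    refine hno d hd0 ?_
    rw [sub_apply, one_apply_eq_self, sub_eq_zero] at hd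
    rw [resolventGram_mulVec]
    exact congrArg (β • ·) hd.symm
  have hunit : IsUnit ((1 : (Fin k → ℝ) →L[ℝ] (Fin k → ℝ)) - S) :=
    isUnit_iff_bijective.mpr ⟨hinj, LinearMap.injective_iff_surjective.mp hinj⟩
  have hA : β ∈ resolventSet ℝ A := by
    have hunitC := spectrum.mem_resolventSet_iff.mp hβC
    rw [spectrum.mem_resolventSet_iff, ← sub_sub]
    exact isUnit_sub_comp_of_isUnit (Ring.mul_inverse_cancel _ hunitC)
      (Ring.inverse_mul_cancel _ hunitC) _ _ hunit
  have : Nontrivial E := by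
    by_contra h
    rw [not_nontrivial_iff_subsingleton] at h
    exact hC.ne (congrArg _ (Subsingleton.elim _ _))
  obtain ⟨ε, hε, hle⟩ := A.rayleighQuotient_le_of_norm_mem_resolventSet hA
  obtain ⟨x, hx⟩ := htop ε hε
  exact (hle x).not_gt hx

theorem isGreatest_eigenvalues_resolventGram [CompleteSpace E]
    (hC : ‖C‖ < ‖C + synthesisCLM f ∘L analysisCLM f‖)
    (htop : ∀ ε > 0, ∃ x, ‖C + synthesisCLM f ∘L analysisCLM f‖ - ε <
      (C + synthesisCLM f ∘L analysisCLM f).rayleighQuotient x) :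
    IsGreatest
      {t | ∃ d ≠ 0, resolventGram C f ‖C + synthesisCLM f ∘L analysisCLM f‖ *ᵥ d = t • d}
      ‖C + synthesisCLM f ∘L analysisCLM f‖ := by
  refine ⟨exists_resolventGram_mulVec_eq_norm_smul C f hC htop, ?_⟩
  rintro t ⟨d, hd, heig⟩
  refine le_of_resolventGram_mulVec_eq_smul C f (mem_resolventSet_of_norm_lt hC)
    ((norm_nonneg C).trans_lt hC) (fun x => ?_) hd heig
  calc _ ≤ ‖(C + synthesisCLM f ∘L analysisCLM f) x‖ * ‖x‖ := real_inner_le_norm _ _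
    _ ≤ ‖C + synthesisCLM f ∘L analysisCLM f‖ * ‖x‖ * ‖x‖ := by gcongr; exact le_opNorm _ _
    _ = _ := by ring

theorem hasSum_resolventGram [CompleteSpace E] {β : ℝ} (h : ‖C‖ < β) :
    HasSum (fun n => (β ^ n)⁻¹ • Matrix.of fun i j => ⟪f i, (C ^ n) (f j)⟫_ℝ)
      (resolventGram C f β) := by
  refine Pi.hasSum.mpr fun i => Pi.hasSum.mpr fun j => ?_
  have := ((hasSum_resolvent h).mapL ((innerSL ℝ (f i)).comp (apply ℝ E (f j)))).mul_left β
  refine this.congr_fun fun n => ?_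
  have hβ : β ≠ 0 := ((norm_nonneg C).trans_lt h).ne'
  simp [pow_succ]
  field_simp

end FiniteRankPerturbation

local notation "L²" => Lp ℝ 2 (volume.restrict UI)

instance : IsProbabilityMeasure (volume.restrict UI) := ⟨by simp [UI]⟩

lemma ae_mem_UI : ∀ᵐ x ∂(volume.restrict UI), x ∈ UI := ae_restrict_mem measurableSet_Icc

lemma ae_mem_UI_prod :
    ∀ᵐ p ∂(volume.restrict UI).prod (volume.restrict UI), p.1 ∈ UI ∧ p.2 ∈ UI := by
  rw [Measure.prod_restrict]
  exact ae_restrict_mem (measurableSet_Icc.prod measurableSet_Icc)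

lemma integrable_mul_prod_of_bounded {k : ℝ × ℝ → ℝ}
    (hk : AEStronglyMeasurable k ((volume.restrict UI).prod (volume.restrict UI))) {K : ℝ}
    (hK : ∀ x ∈ UI, ∀ y ∈ UI, |k (x, y)| ≤ K) {f g : ℝ → ℝ}
    (hf : Integrable f (volume.restrict UI)) (hg : Integrable g (volume.restrict UI)) :
    Integrable (fun p => k p * (f p.1 * g p.2)) ((volume.restrict UI).prod (volume.restrict UI)) :=
  (hf.mul_prod hg).bdd_mul hk (c := K)
    (by filter_upwards [ae_mem_UI_prod] with p hp using hK _ hp.1 _ hp.2)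

lemma inner_toLp_left {v : ℝ → ℝ} (hv : MemLp v 2 (volume.restrict UI)) (u : L²) :
    ⟪hv.toLp v, u⟫_ℝ = ∫ y in UI, v y * u y := by
  rw [L2.inner_def]
  refine integral_congr_ae ?_
  filter_upwards [hv.coeFn_toLp] with y hy
  simp [hy, mul_comm]

lemma norm_toLp_sq {u : ℝ → ℝ} (hu : MemLp u 2 (volume.restrict UI)) :
    ‖hu.toLp u‖ ^ 2 = ∫ x in UI, u x ^ 2 := by
  rw [← real_inner_self_eq_norm_sq, L2.inner_def]
  refine integral_congr_ae ?_
  filter_upwards [hu.coeFn_toLp] with x hx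
  simp [hx, sq]

lemma memLp_two_of_integral_mul_self_ne_zero {u : ℝ → ℝ} (hu : Measurable u)
    (h : ∫ x in UI, u x * u x ≠ 0) : MemLp u 2 (volume.restrict UI) := by
  refine (memLp_two_iff_integrable_sq hu.aestronglyMeasurable).mpr ?_
  simp_rw [sq]
  by_contra hint
  exact h (integral_undef hint)

structure IsBoundedKernel (c : ℝ → ℝ → ℝ) : Prop where
  measurable : Measurable (Function.uncurry c)
  bounded : ∃ K, ∀ x ∈ UI, ∀ y ∈ UI, |c x y| ≤ K

namespace IsBoundedKernel

variable {c : ℝ → ℝ → ℝ} (hc : IsBoundedKernel c)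
include hc

lemma memLp_apply {x : ℝ} (hx : x ∈ UI) : MemLp (c x) 2 (volume.restrict UI) := by
  obtain ⟨K, hK⟩ := hc.bounded
  refine MemLp.of_bound (hc.measurable.comp measurable_prodMk_left).aestronglyMeasurable K ?_
  filter_upwards [ae_mem_UI] with y hy using hK x hx y hy

lemma integrable_mul {x : ℝ} (hx : x ∈ UI) {u : ℝ → ℝ} (hu : MemLp u 2 (volume.restrict UI)) :
    Integrable (fun y => c x y * u y) (volume.restrict UI) :=
  (hc.memLp_apply hx).integrable_mul hu

lemma exists_abs_integral_mul_le :
    ∃ K, 0 ≤ K ∧ ∀ x ∈ UI, ∀ u : L², |∫ y in UI, c x y * u y| ≤ K * ‖u‖ := by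
  obtain ⟨K, hK⟩ := hc.bounded
  refine ⟨max K 0, le_max_right _ _, fun x hx u => ?_⟩
  have hcx := hc.memLp_apply hx
  have hnorm : ‖hcx.toLp (c x)‖ ≤ max K 0 := by
    refine (Lp.norm_le_of_ae_bound (C := max K 0) (le_max_right _ _) ?_).trans_eq
      (by simp [measureUnivNNReal])
    filter_upwards [hcx.coeFn_toLp, ae_mem_UI] with y hy hyI
    rw [hy, Real.norm_eq_abs]
    exact (hK x hx y hyI).trans (le_max_left _ _)
  rw [← inner_toLp_left hcx]
  exact (abs_real_inner_le_norm _ _).trans (by gcongr)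

lemma memLp_integral_mul (u : L²) :
    MemLp (fun x => ∫ y in UI, c x y * u y) 2 (volume.restrict UI) := by
  obtain ⟨K, -, hK⟩ := hc.exists_abs_integral_mul_le
  refine MemLp.of_bound ?_ (K * ‖u‖) ?_
  · exact (hc.measurable.aestronglyMeasurable.mul
      (Lp.aestronglyMeasurable u).comp_snd).integral_prod_right'
  · filter_upwards [ae_mem_UI] with x hx using hK x hx u

def integralLinearMap : L² →ₗ[ℝ] L² where
  toFun u := (hc.memLp_integral_mul u).toLp _
  map_add' u v := by
    rw [← MemLp.toLp_add]
    refine MemLp.toLp_congr _ _ ?_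
    filter_upwards [ae_mem_UI] with x hx
    rw [Pi.add_apply, ← integral_add (hc.integrable_mul hx (Lp.memLp u))
      (hc.integrable_mul hx (Lp.memLp v))]
    refine integral_congr_ae ?_
    filter_upwards [Lp.coeFn_add u v] with y hy
    rw [hy, Pi.add_apply, mul_add]
  map_smul' r u := by
    rw [RingHom.id_apply, ← MemLp.toLp_const_smul]
    refine MemLp.toLp_congr _ _ ?_
    filter_upwards with x
    rw [Pi.smul_apply, smul_eq_mul, ← integral_const_mul]
    refine integral_congr_ae ?_
    filter_upwards [Lp.coeFn_smul r u] with y hy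
    rw [hy, Pi.smul_apply, smul_eq_mul, mul_left_comm]

lemma exists_norm_integralLinearMap_le : ∃ K, ∀ u, ‖hc.integralLinearMap u‖ ≤ K * ‖u‖ := by
  obtain ⟨K, hK0, hK⟩ := hc.exists_abs_integral_mul_le
  refine ⟨K, fun u => (Lp.norm_le_of_ae_bound (C := K * ‖u‖) (by positivity) ?_).trans_eq
    (by simp [measureUnivNNReal])⟩
  filter_upwards [(hc.memLp_integral_mul u).coeFn_toLp, ae_mem_UI] with x hx hxI
  simpa [integralLinearMap, hx] using hK x hxI u

end IsBoundedKernel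

open Classical in
/-- `T_c` on `L²[0,1]`, with the junk value `0` when `c` is not a bounded kernel. -/
def kernelOp (c : ℝ → ℝ → ℝ) : L² →L[ℝ] L² :=
  if hc : IsBoundedKernel c then
    hc.integralLinearMap.mkContinuousOfExistsBound hc.exists_norm_integralLinearMap_le
  else 0

namespace IsBoundedKernel

section

variable {c : ℝ → ℝ → ℝ} (hc : IsBoundedKernel c)
include hc

lemma kernelOp_ae_eq (u : L²) :
    kernelOp c u =ᵐ[volume.restrict UI] fun x => ∫ y in UI, c x y * u y := by
  rw [kernelOp, dif_pos hc]
  exact (hc.memLp_integral_mul u).coeFn_toLp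

lemma inner_kernelOp (u v : L²) :
    ⟪v, kernelOp c u⟫_ℝ = ∫ x in UI, v x * ∫ y in UI, c x y * u y := by
  rw [L2.inner_def]
  refine integral_congr_ae ?_
  filter_upwards [hc.kernelOp_ae_eq u] with x hx
  simp [hx, mul_comm]

lemma inner_toLp_kernelOp {u v : ℝ → ℝ} (hu : MemLp u 2 (volume.restrict UI))
    (hv : MemLp v 2 (volume.restrict UI)) :
    ⟪hv.toLp v, kernelOp c (hu.toLp u)⟫_ℝ = ∫ x in UI, ∫ y in UI, v x * c x y * u y := by
  rw [hc.inner_kernelOp]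
  refine integral_congr_ae ?_
  filter_upwards [hv.coeFn_toLp] with x hx
  rw [hx, ← integral_const_mul]
  refine integral_congr_ae ?_
  filter_upwards [hu.coeFn_toLp] with y hy
  rw [hy, mul_assoc]

lemma isSymmetric_kernelOp (hsymm : ∀ x y, c x y = c y x) :
    (kernelOp c : L² →ₗ[ℝ] L²).IsSymmetric := by
  intro u v
  obtain ⟨K, hK⟩ := hc.bounded
  have hint : Integrable (Function.uncurry fun x y => v x * c x y * u y)
      ((volume.restrict UI).prod (volume.restrict UI)) :=
    (integrable_mul_prod_of_bounded hc.measurable.aestronglyMeasurable hK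
      ((Lp.memLp v).integrable one_le_two) ((Lp.memLp u).integrable one_le_two)).congr
      (ae_of_all _ fun p => by simp only [Function.uncurry]; ring)
  rw [coe_coe, real_inner_comm, hc.inner_kernelOp, hc.inner_kernelOp]
  calc ∫ x in UI, v x * ∫ y in UI, c x y * u y = ∫ x in UI, ∫ y in UI, v x * c x y * u y := by
        simp_rw [mul_assoc, integral_const_mul]
    _ = ∫ y in UI, ∫ x in UI, v x * c x y * u y := integral_integral_swap hint
    _ = ∫ y in UI, u y * ∫ x in UI, c y x * v x := by
        congr 1 with y
        rw [← integral_const_mul]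
        congr 1 with x
        rw [hsymm y x]
        ring

lemma gOpNorm_eq_sSup :
    gOpNorm c = sSup ((fun v => |⟪v, kernelOp c v⟫_ℝ|) '' Metric.closedBall (0 : L²) 1) := by
  rw [gOpNorm]
  congr 1
  ext t
  constructor
  · rintro ⟨u, hum, hui, hu1, rfl⟩
    have hu : MemLp u 2 (volume.restrict UI) :=
      (memLp_two_iff_integrable_sq hum.aestronglyMeasurable).mpr hui
    refine ⟨hu.toLp u, ?_, congrArg abs (hc.inner_toLp_kernelOp hu hu)⟩
    rwa [mem_closedBall_zero_iff, ← sq_le_one_iff₀ (norm_nonneg _), norm_toLp_sq]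
  · rintro ⟨v, hv1, rfl⟩
    have hmk := (Lp.aestronglyMeasurable v).ae_eq_mk
    have hu : MemLp (Lp.aestronglyMeasurable v).mk 2 (volume.restrict UI) :=
      (Lp.memLp v).ae_eq hmk
    have hv : hu.toLp _ = v := Lp.ext (hu.coeFn_toLp.trans hmk.symm)
    refine ⟨_, (Lp.aestronglyMeasurable v).stronglyMeasurable_mk.measurable,
      (memLp_two_iff_integrable_sq hu.1).mp hu, ?_, ?_⟩
    · rw [← norm_toLp_sq hu, hv]
      exact pow_le_one₀ (norm_nonneg _) (mem_closedBall_zero_iff.mp hv1)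
    · beta_reduce
      rw [← hc.inner_toLp_kernelOp hu hu, hv]

lemma gOpNorm_eq_norm_kernelOp (hsymm : ∀ x y, c x y = c y x) : gOpNorm c = ‖kernelOp c‖ := by
  rw [hc.gOpNorm_eq_sSup, norm_eq_sSup_abs_inner_self (hc.isSymmetric_kernelOp hsymm)]

lemma abs_inner_kernelOp_le (hpos : ∀ x ∈ UI, ∀ y ∈ UI, 0 ≤ c x y) (u : L²) :
    |⟪u, kernelOp c u⟫_ℝ| ≤ ⟪|u|, kernelOp c |u|⟫_ℝ := by
  rw [hc.inner_kernelOp, hc.inner_kernelOp]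
  refine abs_integral_le_integral_abs.trans (integral_mono_ae ?_ ?_ ?_)
  · exact ((Lp.memLp u).integrable_mul (hc.memLp_integral_mul u)).abs
  · exact (Lp.memLp |u|).integrable_mul (hc.memLp_integral_mul |u|)
  filter_upwards [Lp.coeFn_abs u, ae_mem_UI] with x hx hxI
  rw [hx, abs_mul]
  refine mul_le_mul_of_nonneg_left (abs_integral_le_integral_abs.trans_eq ?_) (abs_nonneg _)
  refine integral_congr_ae ?_
  filter_upwards [Lp.coeFn_abs u, ae_mem_UI] with y hy hyI
  rw [hy, abs_mul, abs_of_nonneg (hpos x hxI y hyI)]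

lemma exists_lt_rayleighQuotient_kernelOp (hsymm : ∀ x y, c x y = c y x)
    (hpos : ∀ x ∈ UI, ∀ y ∈ UI, 0 ≤ c x y) {ε : ℝ} (hε : 0 < ε) :
    ∃ u, ‖kernelOp c‖ - ε < (kernelOp c).rayleighQuotient u :=
  exists_lt_rayleighQuotient (hc.isSymmetric_kernelOp hsymm)
    (fun u => ⟨|u|, norm_abs_eq_norm u, hc.abs_inner_kernelOp_le hpos u⟩) hε

end

section

variable {a b : ℝ → ℝ → ℝ} (ha : IsBoundedKernel a) (hb : IsBoundedKernel b)
include ha hb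

lemma exists_abs_mul_le : ∃ K, ∀ x ∈ UI, ∀ z ∈ UI, ∀ y ∈ UI, |a x z * b z y| ≤ K := by
  obtain ⟨Ka, hKa⟩ := ha.bounded
  obtain ⟨Kb, hKb⟩ := hb.bounded
  refine ⟨Ka * Kb, fun x hx z hz y hy => ?_⟩
  rw [abs_mul]
  exact mul_le_mul (hKa x hx z hz) (hKb z hz y hy) (abs_nonneg _)
    ((abs_nonneg _).trans (hKa x hx z hz))

lemma comp : IsBoundedKernel fun x y => ∫ z in UI, a x z * b z y := by
  obtain ⟨K, hK⟩ := ha.exists_abs_mul_le hb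
  refine ⟨?_, K, fun x hx y hy => ?_⟩
  · have : Measurable fun q : (ℝ × ℝ) × ℝ => a q.1.1 q.2 * b q.2 q.1.2 :=
      (ha.measurable.comp (measurable_fst.fst.prodMk measurable_snd)).mul
        (hb.measurable.comp (measurable_snd.prodMk measurable_fst.snd))
    exact this.stronglyMeasurable.integral_prod_right'.measurable
  · rw [← Real.norm_eq_abs]
    refine (norm_integral_le_of_norm_le_const ?_).trans_eq (by rw [probReal_univ, mul_one])
    filter_upwards [ae_mem_UI] with z hz using hK x hx z hz y hy

lemma kernelOp_comp :
    kernelOp (fun x y => ∫ z in UI, a x z * b z y) = kernelOp a * kernelOp b := by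
  refine ContinuousLinearMap.ext fun u => Lp.ext ?_
  obtain ⟨K, hK⟩ := ha.exists_abs_mul_le hb
  filter_upwards [(ha.comp hb).kernelOp_ae_eq u, ha.kernelOp_ae_eq (kernelOp b u), ae_mem_UI]
    with x hab hab' hx
  rw [mul_apply_eq_comp, hab, hab']
  have hint : Integrable (Function.uncurry fun z y => a x z * b z y * u y)
      ((volume.restrict UI).prod (volume.restrict UI)) :=
    (integrable_mul_prod_of_bounded (k := fun p => a x p.1 * b p.1 p.2)
      ((ha.measurable.comp (measurable_const.prodMk measurable_fst)).mul
        hb.measurable).aestronglyMeasurable (hK x hx) (integrable_const 1)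
      ((Lp.memLp u).integrable one_le_two)).congr
      (ae_of_all _ fun p => by simp [Function.uncurry, mul_assoc])
  calc _ = ∫ y in UI, ∫ z in UI, a x z * b z y * u y := by simp_rw [integral_mul_const]
    _ = ∫ z in UI, ∫ y in UI, a x z * b z y * u y := (integral_integral_swap hint).symm
    _ = ∫ z in UI, a x z * ∫ y in UI, b z y * u y := by simp_rw [mul_assoc, integral_const_mul]
    _ = _ := integral_congr_ae (by filter_upwards [hb.kernelOp_ae_eq u] with z hz; rw [hz])

end

end IsBoundedKernel

theorem isBoundedKernel_kpow {c : ℝ → ℝ → ℝ} (hc : IsBoundedKernel c) (n : ℕ) :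
    IsBoundedKernel (kpow c n) := by
  induction n with
  | zero => exact hc
  | succ n ih => exact ih.comp hc

theorem kernelOp_kpow {c : ℝ → ℝ → ℝ} (hc : IsBoundedKernel c) (n : ℕ) :
    kernelOp (kpow c n) = kernelOp c ^ (n + 1) := by
  induction n with
  | zero => rw [zero_add, pow_one, kpow]
  | succ n ih => rw [kpow, (isBoundedKernel_kpow hc n).kernelOp_comp hc, ih, ← pow_succ]

lemma IsGraphon.isBoundedKernel {h : ℝ → ℝ → ℝ} (hh : IsGraphon h) : IsBoundedKernel h :=
  ⟨hh.1, 1, fun x hx y hy => abs_le.2 ⟨by linarith [(hh.2.2 x hx y hy).1], (hh.2.2 x hx y hy).2⟩⟩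

lemma IsGraphon.isBoundedKernel_sub {h h' : ℝ → ℝ → ℝ} (hh : IsGraphon h) (hh' : IsGraphon h') :
    IsBoundedKernel fun x y => h x y - h' x y :=
  ⟨hh.1.sub hh'.1, 1, fun x hx y hy => abs_le.2
    ⟨by linarith [(hh.2.2 x hx y hy).1, (hh'.2.2 x hx y hy).2],
      by linarith [(hh.2.2 x hx y hy).2, (hh'.2.2 x hx y hy).1]⟩⟩

def sqrtWeighted {k : ℕ} (θ : Fin k → ℝ) {ν : Fin k → ℝ → ℝ}
    (hν : ∀ i, MemLp (ν i) 2 (volume.restrict UI)) (i : Fin k) : L² :=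
  √(θ i) • (hν i).toLp (ν i)

section FiniteRankKernel

variable {k : ℕ} {θ : Fin k → ℝ} {ν : Fin k → ℝ → ℝ}
  (hν : ∀ i, MemLp (ν i) 2 (volume.restrict UI))

lemma kernelOp_eq_add_synthesisCLM_comp_analysisCLM {c d : ℝ → ℝ → ℝ} (hc : IsBoundedKernel c)
    (hd : IsBoundedKernel d) (hθ : ∀ i, 0 ≤ θ i)
    (hdec : ∀ x ∈ UI, ∀ y ∈ UI, d x y = c x y + ∑ i, θ i * ν i x * ν i y) :
    kernelOp d =
      kernelOp c + synthesisCLM (sqrtWeighted θ hν) ∘L analysisCLM (sqrtWeighted θ hν) := by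
  refine ContinuousLinearMap.ext fun u => Lp.ext ?_
  set f := sqrtWeighted θ hν
  have hterm : ∀ i, ∀ᵐ x ∂(volume.restrict UI),
      ⇑(⟪f i, u⟫_ℝ • f i) x = θ i * ∫ y in UI, ν i x * (ν i y * u y) := fun i => by
    filter_upwards [Lp.coeFn_smul ⟪f i, u⟫_ℝ (f i), Lp.coeFn_smul (√(θ i)) ((hν i).toLp (ν i)),
      (hν i).coeFn_toLp] with x h₁ h₂ h₃
    rw [h₁, Pi.smul_apply, show f i = √(θ i) • (hν i).toLp (ν i) from rfl, h₂, Pi.smul_apply, h₃,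
      real_inner_smul_left, inner_toLp_left, integral_const_mul, smul_eq_mul, smul_eq_mul,
      mul_mul_mul_comm, Real.mul_self_sqrt (hθ i)]
    ring
  filter_upwards [hd.kernelOp_ae_eq u,
      Lp.coeFn_add (kernelOp c u) (synthesisCLM f (analysisCLM f u)), hc.kernelOp_ae_eq u,
      Lp.coeFn_fun_finsetSum Finset.univ fun i => ⟪f i, u⟫_ℝ • f i,
      Filter.eventually_all.2 hterm, ae_mem_UI] with x hdx hadd hcx hsum hterms hx
  rw [hdx, add_apply, comp_apply, hadd, Pi.add_apply, hcx, synthesisCLM_apply]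
  simp only [analysisCLM_apply]
  rw [hsum]
  simp only [hterms]
  have hint : ∀ i, Integrable (fun y => θ i * (ν i x * (ν i y * u y))) (volume.restrict UI) :=
    fun i => (((hν i).integrable_mul (Lp.memLp u)).const_mul _).const_mul _
  simp_rw [← integral_const_mul]
  rw [← integral_finsetSum _ fun i _ => hint i,
    ← integral_add (hc.integrable_mul hx (Lp.memLp u)) (integrable_finsetSum _ fun i _ => hint i)]
  refine integral_congr_ae ?_
  filter_upwards [ae_mem_UI] with y hy
  rw [hdec x hx y hy, add_mul, Finset.sum_mul]
  exact congrArg _ (Finset.sum_congr rfl fun i _ => by ring)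

lemma Fmat_eq_inner {c : ℝ → ℝ → ℝ} (hc : IsBoundedKernel c) (n : ℕ) :
    Fmat θ ν c n =
      Matrix.of fun i j => ⟪sqrtWeighted θ hν i, (kernelOp c ^ n) (sqrtWeighted θ hν j)⟫_ℝ := by
  ext i j
  cases n with
  | zero =>
    simp only [Fmat, Matrix.of_apply, pow_zero, one_apply_eq_self, sqrtWeighted,
      real_inner_smul_left, real_inner_smul_right, inner_toLp_left]
    have : ∫ y in UI, ν i y * (hν j).toLp (ν j) y = ∫ y in UI, ν i y * ν j y :=
      integral_congr_ae (by filter_upwards [(hν j).coeFn_toLp] with y hy; rw [hy])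
    rw [this]
    ring
  | succ n =>
    simp only [Fmat, Matrix.of_apply, ← kernelOp_kpow hc, sqrtWeighted, map_smul,
      real_inner_smul_left, real_inner_smul_right, (isBoundedKernel_kpow hc n).inner_toLp_kernelOp]
    ring

end FiniteRankKernel

end

theorem finite_rank_expansion_general
    (k : ℕ) (θ : Fin k → ℝ) (ν : Fin k → ℝ → ℝ)
    (hθnonneg : ∀ i, 0 ≤ θ i)
    (hνmeas : ∀ i, Measurable (ν i))
    (hortho : ∀ i j, (∫ x in UI, ν i x * ν j x) = if i = j then 1 else 0)
    (hbar : IsGraphon (fun x y => ∑ i, θ i * ν i x * ν i y)) :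
    ∃ ε > (0:ℝ), ∀ h : ℝ → ℝ → ℝ, IsGraphon h →
      gOpNorm (fun x y => h x y - ∑ i, θ i * ν i x * ν i y) < min ε (gOpNorm h) →
        gOpNorm h = maxEig (∑' n : ℕ,
          ((gOpNorm h) ^ n)⁻¹ •
            Fmat θ ν (fun x y => h x y - ∑ i, θ i * ν i x * ν i y) n) := by
  refine ⟨1, one_pos, fun h hh hlt => ?_⟩
  set G := fun x y => h x y - ∑ i, θ i * ν i x * ν i y
  have hH := hh.isBoundedKernel
  have hG : IsBoundedKernel G := hh.isBoundedKernel_sub hbar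
  have hν : ∀ i, MemLp (ν i) 2 (volume.restrict UI) := fun i =>
    memLp_two_of_integral_mul_self_ne_zero (hνmeas i) (by simp [hortho])
  have hdec := kernelOp_eq_add_synthesisCLM_comp_analysisCLM hν hG hH hθnonneg
    fun x _ y _ => (sub_add_cancel _ _).symm
  have hC : ‖kernelOp G‖ < ‖kernelOp h‖ := by
    rw [← hH.gOpNorm_eq_norm_kernelOp hh.2.1, ← hG.gOpNorm_eq_norm_kernelOp
      fun x y => by simp only [G, hh.2.1 x y, hbar.2.1 x y]]
    exact hlt.trans_le (min_le_right _ _)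
  rw [hdec] at hC
  simp_rw [Fmat_eq_inner hν hG, hH.gOpNorm_eq_norm_kernelOp hh.2.1, hdec]
  rw [(hasSum_resolventGram _ _ hC).tsum_eq]
  refine ((isGreatest_eigenvalues_resolventGram _ _ hC fun ε hε => ?_).csSup_eq).symm
  rw [← hdec]
  exact hH.exists_lt_rayleighQuotient_kernelOp hh.2.1 (fun x hx y hy => (hh.2.2 x hx y hy).1) hε

/-- finite-rank expansion of the operator norm. -/
theorem finite_rank_expansion
    (k : ℕ) (hk : 0 < k) (θ : Fin k → ℝ) (ν : Fin k → ℝ → ℝ)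
    (hθnonneg : ∀ i, 0 ≤ θ i)
    (hθanti : ∀ i j : Fin k, i ≤ j → θ j ≤ θ i)
    (hθtop : ∀ i : Fin k, 0 < (i : ℕ) → θ i < θ ⟨0, hk⟩)
    (hνmeas : ∀ i, Measurable (ν i))
    (hortho : ∀ i j, (∫ x in UI, ν i x * ν j x) = if i = j then 1 else 0)
    (hbar : IsGraphon (fun x y => ∑ i, θ i * ν i x * ν i y)) :
    ∃ ε > (0:ℝ), ∀ h : ℝ → ℝ → ℝ, IsGraphon h →
      gOpNorm (fun x y => h x y - ∑ i, θ i * ν i x * ν i y) < min ε (gOpNorm h) →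
        gOpNorm h = maxEig (∑' n : ℕ,
          ((gOpNorm h) ^ n)⁻¹ •
            Fmat θ ν (fun x y => h x y - ∑ i, θ i * ν i x * ν i y) n) :=
  finite_rank_expansion_general k θ ν hθnonneg hνmeas hortho hbar
end
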